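/- arXiv:1305.3959 — 2 statements merged into one kernel-verified Lean document; each statement's English description precedes it below -/
import Mathlib

section
/- Let EE(ξ) = B·log₂(1+γξ)/(v₁ + v₂√ξ) with B, γ, v₁, v₂ > 0. Then on the interval [ζ, ∞), where ζ = (v+√(1+v²))²/γ² with v = v₂/v₁, the function EE is quasi-concave: it has at most one interior stationary point, and if ξ₁ < ξ₂ < ξ₃ are in [ζ,∞) then EE(ξ₂) ≥ min(EE(ξ₁), EE(ξ₃)). -/
open Real Set

/-!
`EE′ = c · ψ` on `(0, ∞)` with `c > 0` and `ψ(ξ) = 2γ√ξ(v₁ + v₂√ξ)/(v₂(1 + γξ)) − log(1 + γξ)`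
(`ψ = eeSign γ v₁ v₂`).
Since `ψ(0) = 0` and `ψ′` has the sign of `1 − γξ`, `ψ` is positive on `(0, 1/γ]` and strictly
decreasing on `[1/γ, ∞)`. So `EE′` changes sign at most once on `(0, ∞)`, and only from `+` to `−`:
`EE` is unimodal there, hence quasi-concave with at most one stationary point on all of
`(0, ∞) ⊇ [ζ, ∞)`.
-/

def SignDropsOnceOn (g : ℝ → ℝ) (s : Set ℝ) : Prop :=
  ∀ x ∈ s, ∀ y ∈ s, x < y → g x ≤ 0 → g y < 0

namespace SignDropsOnceOn

variable {f f' g k : ℝ → ℝ} {s : Set ℝ}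

lemma pos_mul (hg : SignDropsOnceOn g s) (hk : ∀ x ∈ s, 0 < k x) :
    SignDropsOnceOn (fun x => k x * g x) s := fun x hx y hy hxy hkgx =>
  mul_neg_of_pos_of_neg (hk y hy) (hg x hx y hy hxy (nonpos_of_mul_nonpos_right hkgx (hk x hx)))

lemma eq_of_eq_zero (hg : SignDropsOnceOn g s) {a b : ℝ} (ha : a ∈ s) (hb : b ∈ s)
    (hga : g a = 0) (hgb : g b = 0) : a = b := by
  rcases lt_trichotomy a b with hab | hab | hab
  · exact absurd hgb (hg a ha b hb hab hga.le).ne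
  · exact hab
  · exact absurd hga (hg b hb a ha hab hgb.le).ne

lemma eq_of_hasDerivAt_zero (hf' : SignDropsOnceOn f' s)
    (hf : ∀ x ∈ s, HasDerivAt f (f' x) x) {a b : ℝ} (ha : a ∈ s) (hb : b ∈ s)
    (hfa : HasDerivAt f 0 a) (hfb : HasDerivAt f 0 b) : a = b :=
  hf'.eq_of_eq_zero ha hb ((hf a ha).unique hfa) ((hf b hb).unique hfb)

lemma min_le_of_hasDerivAt (hf' : SignDropsOnceOn f' s) (hs : s.OrdConnected)
    (hf : ∀ x ∈ s, HasDerivAt f (f' x) x) {a b c : ℝ} (ha : a ∈ s) (hb : b ∈ s) (hc : c ∈ s)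
    (hab : a < b) (hbc : b < c) : min (f a) (f c) ≤ f b := by
  have hcont : ∀ {p q}, p ∈ s → q ∈ s → ContinuousOn f (Icc p q) := fun hp hq x hx =>
    (hf x (hs.out hp hq hx)).continuousAt.continuousWithinAt
  have hderiv : ∀ {p q}, p ∈ s → q ∈ s → ∀ x ∈ interior (Icc p q),
      HasDerivWithinAt f (f' x) (interior (Icc p q)) x := fun hp hq x hx =>
    (hf x (hs.out hp hq (interior_subset hx))).hasDerivWithinAt
  rcases le_or_gt 0 (f' b) with hb' | hb'
  · have hmono : MonotoneOn f (Icc a b) :=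
      monotoneOn_of_hasDerivWithinAt_nonneg (convex_Icc a b) (hcont ha hb) (hderiv ha hb)
        fun x hx => by
          rw [interior_Icc] at hx
          by_contra! hx'
          exact (hf' x (hs.out ha hb (Ioo_subset_Icc_self hx)) b hb hx.2 hx'.le).not_ge hb'
    exact (min_le_left _ _).trans (hmono (left_mem_Icc.2 hab.le) (right_mem_Icc.2 hab.le) hab.le)
  · have hanti : AntitoneOn f (Icc b c) :=
      antitoneOn_of_hasDerivWithinAt_nonpos (convex_Icc b c) (hcont hb hc) (hderiv hb hc)
        fun x hx => by
          rw [interior_Icc] at hx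
          exact (hf' b hb x (hs.out hb hc (Ioo_subset_Icc_self hx)) hx.1 hb'.le).le
    exact (min_le_right _ _).trans (hanti (left_mem_Icc.2 hbc.le) (right_mem_Icc.2 hbc.le) hbc.le)

end SignDropsOnceOn

noncomputable def eeSign (γ v₁ v₂ ξ : ℝ) : ℝ :=
  2 * γ * √ξ * (v₁ + v₂ * √ξ) / (v₂ * (1 + γ * ξ)) - log (1 + γ * ξ)

section eeSign

variable {γ v₁ v₂ : ℝ}

lemma hasDerivAt_eeSign (hγ : 0 < γ) (hv₂ : 0 < v₂) {x : ℝ} (hx : 0 < x) :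
    HasDerivAt (eeSign γ v₁ v₂)
      (γ * (v₁ + v₂ * √x) * (1 - γ * x) / (v₂ * √x * (1 + γ * x) ^ 2)) x := by
  obtain ⟨s, hs, rfl⟩ : ∃ s, 0 < s ∧ x = s ^ 2 := ⟨√x, sqrt_pos.2 hx, (sq_sqrt hx.le).symm⟩
  have hsqrt : HasDerivAt (√·) (1 / (2 * s)) (s ^ 2) := by
    simpa [sqrt_sq hs.le] using hasDerivAt_sqrt (pow_pos hs 2).ne'
  have hlin : HasDerivAt (fun ξ => 1 + γ * ξ) γ (s ^ 2) := by
    simpa using ((hasDerivAt_id (s ^ 2)).const_mul γ).const_add 1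
  have hnum : HasDerivAt (fun ξ => 2 * γ * √ξ * (v₁ + v₂ * √ξ))
      (2 * γ * (1 / (2 * s)) * (v₁ + v₂ * √(s ^ 2)) + 2 * γ * √(s ^ 2) * (v₂ * (1 / (2 * s))))
      (s ^ 2) :=
    (hsqrt.const_mul (2 * γ)).mul ((hsqrt.const_mul v₂).const_add v₁)
  have hden := hlin.const_mul v₂
  have h1 : 0 < 1 + γ * s ^ 2 := by positivity
  refine ((hnum.div hden (by positivity)).sub (hlin.log h1.ne')).congr_deriv ?_
  rw [sqrt_sq hs.le]
  field_simp
  ring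

lemma continuousOn_eeSign (hγ : 0 < γ) (hv₂ : 0 < v₂) : ContinuousOn (eeSign γ v₁ v₂) (Ici 0) := by
  have h1 : ∀ x ∈ Ici (0 : ℝ), 0 < 1 + γ * x := fun x (hx : 0 ≤ x) => by positivity
  refine ContinuousOn.sub (ContinuousOn.div (by fun_prop) (by fun_prop) ?_)
    (ContinuousOn.log (by fun_prop) fun x hx => (h1 x hx).ne')
  exact fun x hx => (mul_pos hv₂ (h1 x hx)).ne'

lemma strictMonoOn_eeSign (hγ : 0 < γ) (hv₁ : 0 < v₁) (hv₂ : 0 < v₂) :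
    StrictMonoOn (eeSign γ v₁ v₂) (Icc 0 γ⁻¹) := by
  refine strictMonoOn_of_hasDerivWithinAt_pos (convex_Icc _ _)
    ((continuousOn_eeSign hγ hv₂).mono Icc_subset_Ici_self)
    (fun x hx => (hasDerivAt_eeSign hγ hv₂ (by rw [interior_Icc] at hx; exact hx.1)).hasDerivWithinAt)
    fun x hx => ?_
  rw [interior_Icc] at hx
  have hγx : γ * x < 1 := by simpa [hγ.ne'] using mul_lt_mul_of_pos_left hx.2 hγ
  have hx0 : 0 < x := hx.1
  have := sqrt_pos.2 hx0
  exact div_pos (mul_pos (by positivity) (by linarith)) (by positivity)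

lemma strictAntiOn_eeSign (hγ : 0 < γ) (hv₁ : 0 < v₁) (hv₂ : 0 < v₂) :
    StrictAntiOn (eeSign γ v₁ v₂) (Ici γ⁻¹) := by
  have hpos : ∀ x ∈ Ici γ⁻¹, 0 < x := fun x hx => (inv_pos.2 hγ).trans_le hx
  refine strictAntiOn_of_hasDerivWithinAt_neg (convex_Ici _)
    (fun x hx => (hasDerivAt_eeSign hγ hv₂ (hpos x hx)).continuousAt.continuousWithinAt)
    (fun x hx => (hasDerivAt_eeSign hγ hv₂ (hpos x (interior_subset hx))).hasDerivWithinAt)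
    fun x hx => ?_
  rw [interior_Ici] at hx
  have hx0 := hpos x (mem_Ici.2 hx.le)
  have hγx : 1 < γ * x := by simpa [hγ.ne'] using mul_lt_mul_of_pos_left hx hγ
  have := sqrt_pos.2 hx0
  refine div_neg_of_neg_of_pos (mul_neg_of_pos_of_neg (by positivity) (by linarith)) (by positivity)

lemma eeSign_pos (hγ : 0 < γ) (hv₁ : 0 < v₁) (hv₂ : 0 < v₂) {x : ℝ} (hx : 0 < x)
    (hxγ : x ≤ γ⁻¹) : 0 < eeSign γ v₁ v₂ x := by
  simpa [eeSign] using strictMonoOn_eeSign hγ hv₁ hv₂ (left_mem_Icc.2 (inv_pos.2 hγ).le)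
    ⟨hx.le, hxγ⟩ hx

lemma signDropsOnceOn_eeSign (hγ : 0 < γ) (hv₁ : 0 < v₁) (hv₂ : 0 < v₂) :
    SignDropsOnceOn (eeSign γ v₁ v₂) (Ioi 0) := by
  intro x hx y _ hxy hψx
  have hγx : γ⁻¹ < x := lt_of_not_ge fun h => (eeSign_pos hγ hv₁ hv₂ hx h).not_ge hψx
  exact (strictAntiOn_eeSign hγ hv₁ hv₂ hγx.le (hγx.trans hxy).le hxy).trans_le hψx

lemma hasDerivAt_logb_div_add_sqrt (B : ℝ) (hγ : 0 < γ) (hv₁ : 0 < v₁) (hv₂ : 0 < v₂) {x : ℝ}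
    (hx : 0 < x) :
    HasDerivAt (fun ξ => B * logb 2 (1 + γ * ξ) / (v₁ + v₂ * √ξ))
      (B * v₂ / (log 2 * (2 * √x) * (v₁ + v₂ * √x) ^ 2) * eeSign γ v₁ v₂ x) x := by
  have hsx := sqrt_pos.2 hx
  have h1 : 0 < 1 + γ * x := by positivity
  have hlin : HasDerivAt (fun ξ => 1 + γ * ξ) γ x := by
    simpa using ((hasDerivAt_id x).const_mul γ).const_add 1
  have hnum : HasDerivAt (fun ξ => B * logb 2 (1 + γ * ξ)) (B * (γ / (1 + γ * x) / log 2)) x := by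
    simpa only [logb] using ((hlin.log h1.ne').div_const (log 2)).const_mul B
  have hden : HasDerivAt (fun ξ => v₁ + v₂ * √ξ) (v₂ * (1 / (2 * √x))) x :=
    ((hasDerivAt_sqrt hx.ne').const_mul v₂).const_add v₁
  have hlog2 : 0 < log 2 := log_pos one_lt_two
  refine (hnum.div hden (by positivity)).congr_deriv ?_
  rw [eeSign, logb]
  field_simp

end eeSign

/-- `EE(ξ) = B·log₂(1+γξ)/(v₁ + v₂√ξ)` is quasi-concave on `[ζ, ∞)`, where
`ζ = (v+√(1+v²))²/γ²`, `v = v₂/v₁`: it has at most one interior stationary point, and for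
`ξ₁ < ξ₂ < ξ₃` in `[ζ,∞)` one has `EE(ξ₂) ≥ min(EE(ξ₁), EE(ξ₃))`. -/
theorem stmt8 (B γ v₁ v₂ : ℝ) (hB : 0 < B) (hγ : 0 < γ) (hv₁ : 0 < v₁) (hv₂ : 0 < v₂)
    (EE : ℝ → ℝ)
    (hEE : ∀ ξ : ℝ, EE ξ = B * Real.logb 2 (1 + γ * ξ) / (v₁ + v₂ * Real.sqrt ξ))
    (ζ : ℝ) (hζ : ζ = (v₂ / v₁ + Real.sqrt (1 + (v₂ / v₁) ^ 2)) ^ 2 / γ ^ 2) :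
    (∀ a ∈ Set.Ioi ζ, ∀ b ∈ Set.Ioi ζ,
        HasDerivAt EE 0 a → HasDerivAt EE 0 b → a = b) ∧
    (∀ ξ₁ ∈ Set.Ici ζ, ∀ ξ₂ ∈ Set.Ici ζ, ∀ ξ₃ ∈ Set.Ici ζ,
        ξ₁ < ξ₂ → ξ₂ < ξ₃ → min (EE ξ₁) (EE ξ₃) ≤ EE ξ₂) := by
  have hζ0 : 0 < ζ := by rw [hζ]; positivity
  have hsub : Ici ζ ⊆ Ioi 0 := Ici_subset_Ioi.2 hζ0
  obtain rfl : EE = _ := funext hEE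
  have hderiv := fun x (hx : x ∈ Ioi (0 : ℝ)) => hasDerivAt_logb_div_add_sqrt B hγ hv₁ hv₂ hx
  have hdrop := (signDropsOnceOn_eeSign hγ hv₁ hv₂).pos_mul
    (k := fun x => B * v₂ / (log 2 * (2 * √x) * (v₁ + v₂ * √x) ^ 2))
    fun x (hx : 0 < x) => by have := sqrt_pos.2 hx; have := log_pos one_lt_two; positivity
  refine ⟨fun a ha b hb => hdrop.eq_of_hasDerivAt_zero hderiv (hsub (mem_Ici_of_Ioi ha))
    (hsub (mem_Ici_of_Ioi hb)), fun ξ₁ h₁ ξ₂ h₂ ξ₃ h₃ =>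
    hdrop.min_le_of_hasDerivAt ordConnected_Ioi hderiv (hsub h₁) (hsub h₂) (hsub h₃)⟩
end

section
/- For ξ > 0, the equation (2/ln 2)·(1/ξ)·(v₁√ξ + v₂ξ) = v₂·log₂(γξ) (the high-SNR stationarity condition) has the solution ξ = (1/γ)·exp(2 + 2W(√γ/(e·v))), where v = v₂/v₁ and W is the principal branch of the Lambert W function. Moreover since √γ/(ev) > 0, this W value is unique and positive. -/
/-!
After cancelling `ξ` and `log 2`, the stationarity condition reads
`v₁ / √ξ = v₂ (log (γξ) / 2 - 1)`. At `ξ = e^{2+2w}/γ` this becomes `v₁ √γ = v₂ w e^{1+w}`,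
which is the Lambert relation `w e^w = √γ / (e v)` cleared of denominators. Uniqueness holds
because `x ↦ x e^x` is strictly increasing on `[0, ∞)`.
-/

open Real

def HighSNRStationary (v₁ v₂ γ ξ : ℝ) : Prop :=
  (2 / log 2) * (1 / ξ) * (v₁ * √ξ + v₂ * ξ) = v₂ * logb 2 (γ * ξ)

theorem highSNRStationary_iff {v₁ v₂ γ ξ : ℝ} (hξ : 0 < ξ) :
    HighSNRStationary v₁ v₂ γ ξ ↔ v₁ / √ξ = v₂ * (log (γ * ξ) / 2 - 1) := by
  have hlog2 : 0 < log 2 := log_pos one_lt_two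
  have hlhs : (2 / log 2) * (1 / ξ) * (v₁ * √ξ + v₂ * ξ) = 2 * (v₁ / √ξ + v₂) / log 2 := by
    field_simp
    linear_combination v₁ * mul_self_sqrt hξ.le
  rw [HighSNRStationary, hlhs, logb, mul_div_assoc', div_left_inj' hlog2.ne']
  constructor <;> intro h <;> linarith

theorem highSNRStationary_lambert {v₁ v₂ γ w : ℝ} (hv₂ : v₂ ≠ 0) (hγ : 0 < γ)
    (hW : w * exp w = √γ / (exp 1 * (v₂ / v₁))) :
    HighSNRStationary v₁ v₂ γ ((1 / γ) * exp (2 + 2 * w)) := by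
  have hξ : (1 / γ) * exp (2 + 2 * w) = (exp (1 + w) / √γ) ^ 2 := by
    rw [div_pow, sq_sqrt hγ.le, ← exp_nat_mul]
    ring_nf
  have hlog : log (γ * ((1 / γ) * exp (2 + 2 * w))) = 2 + 2 * w := by
    rw [← mul_assoc, mul_one_div_cancel hγ.ne', one_mul, log_exp]
  rw [highSNRStationary_iff (by positivity), hlog, hξ, sqrt_sq (by positivity), exp_add]
  field_simp at hW ⊢
  linear_combination -hW

theorem strictMonoOn_mul_exp : StrictMonoOn (fun x : ℝ => x * exp x) (Set.Ici 0) :=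
  fun _ hx _ _ hlt => mul_lt_mul'' hlt (exp_lt_exp.mpr hlt) hx (exp_pos _).le

theorem stmt10_general (v₁ v₂ γ : ℝ) (hv₂ : 0 < v₂) (hγ : 0 < γ)
    (w : ℝ) (hw : 0 < w)
    (hW : w * Real.exp w = Real.sqrt γ / (Real.exp 1 * (v₂ / v₁))) :
    ((2 / Real.log 2) * (1 / ((1 / γ) * Real.exp (2 + 2 * w))) *
        (v₁ * Real.sqrt ((1 / γ) * Real.exp (2 + 2 * w))
          + v₂ * ((1 / γ) * Real.exp (2 + 2 * w)))
      = v₂ * Real.logb 2 (γ * ((1 / γ) * Real.exp (2 + 2 * w)))) ∧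
    (∀ w' : ℝ, 0 < w' →
      w' * Real.exp w' = Real.sqrt γ / (Real.exp 1 * (v₂ / v₁)) → w' = w) := by
  refine ⟨highSNRStationary_lambert hv₂.ne' hγ hW, fun w' hw' hW' => ?_⟩
  exact strictMonoOn_mul_exp.injOn (Set.mem_Ici.mpr hw'.le) (Set.mem_Ici.mpr hw.le)
    (hW'.trans hW.symm)

/-- If `w > 0` satisfies the Lambert W relation `w·e^w = √γ/(e·v)` with
`v = v₂/v₁`, then `ξ = (1/γ)·exp(2 + 2w)` solves the high-SNR stationarity condition
`(2/ln 2)·(1/ξ)·(v₁√ξ + v₂ξ) = v₂·log₂(γξ)`; moreover such a `w` is unique. -/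
theorem stmt10 (v₁ v₂ γ : ℝ) (hv₁ : 0 < v₁) (hv₂ : 0 < v₂) (hγ : 0 < γ)
    (w : ℝ) (hw : 0 < w)
    (hW : w * Real.exp w = Real.sqrt γ / (Real.exp 1 * (v₂ / v₁))) :
    ((2 / Real.log 2) * (1 / ((1 / γ) * Real.exp (2 + 2 * w))) *
        (v₁ * Real.sqrt ((1 / γ) * Real.exp (2 + 2 * w))
          + v₂ * ((1 / γ) * Real.exp (2 + 2 * w)))
      = v₂ * Real.logb 2 (γ * ((1 / γ) * Real.exp (2 + 2 * w)))) ∧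
    (∀ w' : ℝ, 0 < w' →
      w' * Real.exp w' = Real.sqrt γ / (Real.exp 1 * (v₂ / v₁)) → w' = w) :=
  stmt10_general v₁ v₂ γ hv₂ hγ w hw hW
end
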